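/- arXiv:2201.09044 — 10 statements merged into one kernel-verified Lean document; each statement's English description precedes it below -/
import Mathlib

section
/- Let A be a binary labeling of n ≥ 3 elements with exactly one positive, and let M be a binary classification measure satisfying the constant baseline property with constant c_base. Then comparing the expectation over uniformly random labelings B1 with one positive and B2 with two positives yields the identity (1/n)·M(1,0,0,n−1) + ((n−1)/n)·M(0,1,1,n−2) = (2/n)·M(1,0,1,n−2) + ((n−2)/n)·M(0,1,2,n−3), where M(1,0,0,n−1) = c_max by maximal agreement; equivalently, 2·M(1,0,1,n−2) − c_max = (n−1)·M(0,1,1,n−2) − (n−2)·M(0,1,2,n−3). -/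
open Finset

/-- Confusion matrix entries of binary labelings: (c11, c10, c01, c00). -/
def confusion {n : ℕ} (A B : Fin n → Bool) : ℕ × ℕ × ℕ × ℕ :=
  ((univ.filter fun i => A i = true ∧ B i = true).card,
   (univ.filter fun i => A i = true ∧ B i = false).card,
   (univ.filter fun i => A i = false ∧ B i = true).card,
   (univ.filter fun i => A i = false ∧ B i = false).card)

/-- Apply a binary classification measure to a confusion matrix. -/
def apply4 (M : ℕ → ℕ → ℕ → ℕ → ℝ) : ℕ × ℕ × ℕ × ℕ → ℝ
  | (c11, c10, c01, c00) => M c11 c10 c01 c00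

/-- Number of positives of a binary labeling. -/
def pos {n : ℕ} (B : Fin n → Bool) : ℕ := (univ.filter fun i => B i = true).card

lemma choose_two (m : ℕ) : 2 * m.choose 2 = m * (m - 1) := by
  induction m with
  | zero => rfl
  | succ k ih =>
    rw [Nat.choose_succ_succ, Nat.mul_add, ih, Nat.choose_one_right, Nat.succ_sub_one]
    cases k with
    | zero => rfl
    | succ j => simp only [Nat.succ_sub_one]; ring

/-- For a measure with the constant baseline property and maximal agreement,
comparing the expectations over random labelings with one and with two positives
(relative to a true labeling with one positive, n ≥ 3) yields
2·M(1,0,1,n−2) − c_max = (n−1)·M(0,1,1,n−2) − (n−2)·M(0,1,2,n−3). -/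
theorem constant_baseline_identity (M : ℕ → ℕ → ℕ → ℕ → ℝ) (cmax cbase : ℝ)
    -- maximal agreement with constant cmax
    (hmax : ∀ c11 c10 c01 c00, M c11 c10 c01 c00 ≤ cmax ∧
      (M c11 c10 c01 c00 = cmax ↔ c10 = 0 ∧ c01 = 0))
    -- constant baseline: the expectation of M(A,B) over B uniform among labelings
    -- with non-unary class sizes (b1, n − b1) equals cbase
    (hbase : ∀ (n : ℕ) (A : Fin n → Bool) (b1 : ℕ), 0 < b1 → b1 < n →
      (∑ B ∈ univ.filter (fun B : Fin n → Bool => pos B = b1), apply4 M (confusion A B)) /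
        ((univ.filter (fun B : Fin n → Bool => pos B = b1)).card : ℝ) = cbase)
    (n : ℕ) (hn : 3 ≤ n) :
    2 * M 1 0 1 (n - 2) - cmax =
      ((n : ℝ) - 1) * M 0 1 1 (n - 2) - ((n : ℝ) - 2) * M 0 1 2 (n - 3) := by
  obtain ⟨m, rfl⟩ : ∃ m, n = m + 3 := ⟨n - 3, by omega⟩
  set n := m + 3 with hnn
  have hn0 : 0 < n := by omega
  set z : Fin n := ⟨0, hn0⟩ with hz
  set A : Fin n → Bool := fun i => decide (i = z) with hA
  have hs1 : n - 1 = m + 2 := by omega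
  have hs2 : n - 2 = m + 1 := by omega
  have hs3 : n - 3 = m := by omega
  -- transfer sums over labelings to sums over finsets
  have transfer : ∀ (k : ℕ) (f : (Fin n → Bool) → ℝ),
      ∑ B ∈ univ.filter (fun B : Fin n → Bool => pos B = k), f B
        = ∑ S ∈ (univ : Finset (Fin n)).powersetCard k, f (fun i => decide (i ∈ S)) := by
    intro k f
    refine Finset.sum_nbij' (i := fun B => univ.filter (fun i => B i = true))
      (j := fun S i => decide (i ∈ S)) ?_ ?_ ?_ ?_ ?_
    · intro B hB
      rw [Finset.mem_filter] at hB; simp only [mem_univ, true_and, pos] at hB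
      simp [Finset.mem_powersetCard, hB]
    · intro S hS
      simp only [Finset.mem_powersetCard] at hS
      rw [Finset.mem_filter]; simp only [mem_univ, true_and, pos]
      rw [← hS.2]
      congr 1
      ext i; simp
    · intro B hB; funext i; simp
    · intro S hS; ext i; simp
    · intro B hB; congr 1; funext i; simp
  have hcard : ∀ k : ℕ, ((univ.filter (fun B : Fin n → Bool => pos B = k)).card : ℝ)
      = (n.choose k : ℝ) := by
    intro k
    have h := transfer k (fun _ => (1 : ℝ))
    simpa [Finset.card_powersetCard] using h
  -- confusion matrices of indicator labelings
  have conf1 : ∀ S : Finset (Fin n), z ∈ S →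
      confusion A (fun i => decide (i ∈ S)) = (1, 0, S.card - 1, n - S.card) := by
    intro S hzS
    have h11 : (univ.filter fun i => A i = true ∧ decide (i ∈ S) = true) = {z} := by
      ext i
      simp only [hA, mem_filter, mem_univ, true_and, decide_eq_true_eq, mem_singleton]
      exact ⟨fun h => h.1, fun h => ⟨h, h ▸ hzS⟩⟩
    have h10 : (univ.filter fun i => A i = true ∧ decide (i ∈ S) = false) = ∅ := by
      ext i
      simp only [hA, mem_filter, mem_univ, true_and, decide_eq_true_eq,
        decide_eq_false_iff_not, Finset.notMem_empty, iff_false, not_and]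
      intro h; subst h; simp [hzS]
    have h01 : (univ.filter fun i => A i = false ∧ decide (i ∈ S) = true) = S.erase z := by
      ext i
      simp [hA, mem_erase, and_comm]
    have h00 : (univ.filter fun i => A i = false ∧ decide (i ∈ S) = false) = Sᶜ := by
      ext i
      simp only [hA, mem_filter, mem_univ, true_and, decide_eq_false_iff_not, mem_compl]
      exact ⟨fun h => h.2, fun h => ⟨fun e => h (e ▸ hzS), h⟩⟩
    simp only [confusion, h11, h10, h01, h00, Finset.card_singleton, Finset.card_empty,
      Finset.card_erase_of_mem hzS, Finset.card_compl, Fintype.card_fin]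
  have conf2 : ∀ S : Finset (Fin n), z ∉ S →
      confusion A (fun i => decide (i ∈ S)) = (0, 1, S.card, n - 1 - S.card) := by
    intro S hzS
    have h11 : (univ.filter fun i => A i = true ∧ decide (i ∈ S) = true) = ∅ := by
      ext i
      simp only [hA, mem_filter, mem_univ, true_and, decide_eq_true_eq,
        Finset.notMem_empty, iff_false, not_and]
      intro h; subst h; exact hzS
    have h10 : (univ.filter fun i => A i = true ∧ decide (i ∈ S) = false) = {z} := by
      ext i
      simp only [hA, mem_filter, mem_univ, true_and, decide_eq_true_eq,
        decide_eq_false_iff_not, mem_singleton]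
      exact ⟨fun h => h.1, fun h => ⟨h, h ▸ hzS⟩⟩
    have h01 : (univ.filter fun i => A i = false ∧ decide (i ∈ S) = true) = S := by
      ext i
      simp only [hA, mem_filter, mem_univ, true_and, decide_eq_false_iff_not,
        decide_eq_true_eq]
      exact ⟨fun h => h.2, fun h => ⟨fun e => hzS (e ▸ h), h⟩⟩
    have h00 : (univ.filter fun i => A i = false ∧ decide (i ∈ S) = false) = Sᶜ.erase z := by
      ext i
      simp only [hA, mem_filter, mem_univ, true_and, decide_eq_false_iff_not, mem_erase,
        mem_compl]
    have hzc : z ∈ Sᶜ := by simpa using hzS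
    simp only [confusion, h11, h10, h01, h00, Finset.card_singleton, Finset.card_empty,
      Finset.card_erase_of_mem hzc, Finset.card_compl, Fintype.card_fin,
      Nat.sub_right_comm]
  -- equation from b1 = 1
  have e1 : cmax + ((m : ℝ) + 2) * M 0 1 1 (m + 1) = ((m : ℝ) + 3) * cbase := by
    have h := hbase n A 1 one_pos (by omega)
    rw [transfer, hcard] at h
    rw [Finset.powersetCard_one, Finset.sum_map] at h
    have hterm : ∀ j : Fin n,
        apply4 M (confusion A (fun i => decide (i ∈ ({j} : Finset (Fin n)))))
          = if j = z then cmax else M 0 1 1 (m + 1) := by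
      intro j
      by_cases hj : j = z
      · rw [conf1 ({j} : Finset (Fin n)) (by simp [hj])]
        simp only [apply4, Finset.card_singleton, if_pos hj]
        exact (hmax 1 0 0 (n - 1)).2.mpr ⟨rfl, rfl⟩
      · rw [conf2 ({j} : Finset (Fin n))
          (by simp only [mem_singleton]; exact fun h => hj h.symm)]
        have : n - 1 - 1 = m + 1 := by omega
        simp only [apply4, Finset.card_singleton, this, if_neg hj]
    simp only [Function.Embedding.coeFn_mk, hterm] at h
    rw [← Finset.add_sum_erase _ _ (mem_univ z), if_pos rfl,
      Finset.sum_congr rfl (fun x hx => if_neg (Finset.mem_erase.1 hx).1),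
      Finset.sum_const, Finset.card_erase_of_mem (mem_univ z), Finset.card_univ,
      Fintype.card_fin] at h
    rw [Nat.choose_one_right] at h
    have hne : ((n : ℕ) : ℝ) ≠ 0 := by
      rw [hnn]; push_cast; positivity
    rw [div_eq_iff hne] at h
    rw [hs1, hnn] at h
    simp only [nsmul_eq_mul] at h
    push_cast at h ⊢
    linarith [h]
  -- equation from b1 = 2
  have e2 : ((m : ℝ) + 2) * M 1 0 1 (m + 1) + (((m + 2).choose 2 : ℕ) : ℝ) * M 0 1 2 m
      = (((m + 3).choose 2 : ℕ) : ℝ) * cbase := by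
    have h := hbase n A 2 two_pos (by omega)
    rw [transfer, hcard] at h
    rw [← Finset.sum_filter_add_sum_filter_not ((univ : Finset (Fin n)).powersetCard 2)
      (fun S => z ∈ S)] at h
    have hsplit : Finset.filter (fun S => z ∉ S) ((univ : Finset (Fin n)).powersetCard 2)
        = (univ.erase z).powersetCard 2 := by
      ext S
      simp only [mem_filter, Finset.mem_powersetCard, Finset.subset_erase, subset_univ,
        true_and]
      tauto
    have hc2 : (Finset.filter (fun S => z ∉ S)
        ((univ : Finset (Fin n)).powersetCard 2)).card = (m + 2).choose 2 := by
      rw [hsplit, Finset.card_powersetCard, Finset.card_erase_of_mem (mem_univ z),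
        Finset.card_univ, Fintype.card_fin, hs1]
    have hc1 : (Finset.filter (fun S => z ∈ S)
        ((univ : Finset (Fin n)).powersetCard 2)).card = m + 2 := by
      have htot := Finset.card_filter_add_card_filter_not
        (s := (univ : Finset (Fin n)).powersetCard 2) (p := fun S => z ∈ S)
      rw [hc2, Finset.card_powersetCard, Finset.card_univ, Fintype.card_fin,
        show n.choose 2 = (m + 3).choose 2 from rfl] at htot
      have hrec : (m + 3).choose 2 = (m + 2).choose 1 + (m + 2).choose 2 :=
        Nat.choose_succ_succ (m + 2) 1
      rw [Nat.choose_one_right] at hrec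
      omega
    have hsum1 : ∑ S ∈ Finset.filter (fun S => z ∈ S)
        ((univ : Finset (Fin n)).powersetCard 2),
        apply4 M (confusion A (fun i => decide (i ∈ S)))
        = ((m : ℝ) + 2) * M 1 0 1 (m + 1) := by
      have hcg : ∀ S ∈ Finset.filter (fun S => z ∈ S)
          ((univ : Finset (Fin n)).powersetCard 2),
          apply4 M (confusion A (fun i => decide (i ∈ S))) = M 1 0 1 (m + 1) := by
        intro S hS
        rw [mem_filter, Finset.mem_powersetCard] at hS
        rw [conf1 S hS.2, hS.1.2, hs2]
        rfl
      rw [Finset.sum_congr rfl hcg, Finset.sum_const, hc1, nsmul_eq_mul]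
      push_cast; ring
    have hsum2 : ∑ S ∈ Finset.filter (fun S => z ∉ S)
        ((univ : Finset (Fin n)).powersetCard 2),
        apply4 M (confusion A (fun i => decide (i ∈ S)))
        = (((m + 2).choose 2 : ℕ) : ℝ) * M 0 1 2 m := by
      have hcg : ∀ S ∈ Finset.filter (fun S => z ∉ S)
          ((univ : Finset (Fin n)).powersetCard 2),
          apply4 M (confusion A (fun i => decide (i ∈ S))) = M 0 1 2 m := by
        intro S hS
        rw [mem_filter, Finset.mem_powersetCard] at hS
        rw [conf2 S hS.2, hS.1.2]
        have h2 : n - 1 - 2 = m := by omega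
        rw [h2]
        rfl
      rw [Finset.sum_congr rfl hcg, Finset.sum_const, hc2, nsmul_eq_mul]
    rw [hsum1, hsum2] at h
    have hne : ((n.choose 2 : ℕ) : ℝ) ≠ 0 := by
      have : 0 < n.choose 2 := Nat.choose_pos (by omega)
      positivity
    rw [div_eq_iff hne, show n.choose 2 = (m + 3).choose 2 from rfl] at h
    linarith [h]
  -- final arithmetic
  have hch1 : (((m + 3).choose 2 : ℕ) : ℝ) = ((m : ℝ) + 3) * ((m : ℝ) + 2) / 2 := by
    have h' : 2 * (m + 3).choose 2 = (m + 3) * (m + 2) := by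
      simpa using choose_two (m + 3)
    have := congrArg (fun x : ℕ => (x : ℝ)) h'
    push_cast at this
    linarith
  have hch2 : (((m + 2).choose 2 : ℕ) : ℝ) = ((m : ℝ) + 2) * ((m : ℝ) + 1) / 2 := by
    have h' : 2 * (m + 2).choose 2 = (m + 2) * (m + 1) := by
      simpa using choose_two (m + 2)
    have := congrArg (fun x : ℕ => (x : ℝ)) h'
    push_cast at this
    linarith
  rw [hch1, hch2] at e2
  rw [hnn, hs2, hs3]
  push_cast
  have hm2 : ((m : ℝ) + 2) ≠ 0 := by positivity
  have e2' : 2 * M 1 0 1 (m + 1) + ((m : ℝ) + 1) * M 0 1 2 m = ((m : ℝ) + 3) * cbase := by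
    apply mul_left_cancel₀ hm2
    linear_combination 2 * e2
  linear_combination e2' - e1
end

section
/- The Generalized Means measure GM_r is strictly increasing in c11 (for fixed c10, c01, c00), provided neither labeling is constant. Concretely, for r ≠ 0 and nonnegative reals c11, c10, c01, c00 with a1 = c11+c10 > 0, a0 = c01+c00 > 0, b1 = c11+c01 > 0, b0 = c10+c00 > 0, the partial derivative of GM_r(c11,c10,c01,c00) = (n·c11 − a1·b1)·(½(a1^r a0^r + b1^r b0^r))^{−1/r} with respect to c11 (treating c11,c10,c01,c00 as independent variables, n = c11+c10+c01+c00) has the same sign as a0^r·a1^{r−1}·a0·c10 + b0^r·b1^{r−1}·b0·c01 ≥ 0, and is strictly positive whenever c10 > 0 or c01 > 0. -/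
noncomputable def GM (r c11 c10 c01 c00 : ℝ) : ℝ :=
  ((c11 + c10 + c01 + c00) * c11 - (c11 + c10) * (c11 + c01)) /
    ((1 / 2) * ((c11 + c10) ^ r * (c01 + c00) ^ r +
                (c11 + c01) ^ r * (c10 + c00) ^ r)) ^ (1 / r)

/-!
Writing `M = ½(a1^r a0^r + b1^r b0^r)`, the numerator of `GM_r` is `c00·c11 − c10·c01`, so
`GM_r = (c00·c11 − c10·c01) · M^(−1/r)`. The quotient rule gives the derivative in `c11` as
`(c00·M − (1/r)(c00·c11 − c10·c01)·∂M) / (M · M^(1/r))`, and since `∂M = (r/2)(a1^(r−1) a0^r + b1^(r−1) b0^r)`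
the factor `r` cancels and the numerator collapses to half of
`a0^r a1^(r−1) a0 c10 + b0^r b1^(r−1) b0 c01`, a sum of nonnegative terms.
-/

theorem Real.sign_div_of_pos {a b : ℝ} (hb : 0 < b) : Real.sign (a / b) = Real.sign a := by
  rcases lt_trichotomy a 0 with ha | rfl | ha
  · rw [Real.sign_of_neg ha, Real.sign_of_neg (div_neg_of_neg_of_pos ha hb)]
  · rw [zero_div]
  · rw [Real.sign_of_pos ha, Real.sign_of_pos (div_pos ha hb)]

theorem HasDerivAt.div_rpow_const {f g : ℝ → ℝ} {f' g' x : ℝ} (p : ℝ)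
    (hf : HasDerivAt f f' x) (hg : HasDerivAt g g' x) (hgx : 0 < g x) :
    HasDerivAt (fun y => f y / g y ^ p) ((f' * g x - p * f x * g') / (g x * g x ^ p)) x := by
  have hgp : 0 < g x ^ p := Real.rpow_pos_of_pos hgx p
  refine (hf.div (hg.rpow_const (p := p) (Or.inl hgx.ne')) hgp.ne').congr_deriv ?_
  rw [Real.rpow_sub_one hgx.ne']
  field_simp

namespace GM

variable (r c10 c01 c00 : ℝ)

/-- `½(a1^r a0^r + b1^r b0^r)` as a function of `c11`, with `c10, c01, c00` fixed. -/
noncomputable def meanPow (x : ℝ) : ℝ :=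
  (1 / 2) * ((x + c10) ^ r * (c01 + c00) ^ r + (x + c01) ^ r * (c10 + c00) ^ r)

theorem eq_div_meanPow (x : ℝ) :
    GM r x c10 c01 c00 = (c00 * x - c10 * c01) / meanPow r c10 c01 c00 x ^ (1 / r) := by
  rw [GM, meanPow]
  ring_nf

variable {r c10 c01 c00}

theorem meanPow_pos {x : ℝ} (ha1 : 0 < x + c10) (ha0 : 0 < c01 + c00)
    (hb1 : 0 < x + c01) (hb0 : 0 < c10 + c00) : 0 < meanPow r c10 c01 c00 x := by
  have := Real.rpow_pos_of_pos ha1 r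
  have := Real.rpow_pos_of_pos ha0 r
  have := Real.rpow_pos_of_pos hb1 r
  have := Real.rpow_pos_of_pos hb0 r
  unfold meanPow
  positivity

theorem hasDerivAt_meanPow {x : ℝ} (ha1 : x + c10 ≠ 0) (hb1 : x + c01 ≠ 0) :
    HasDerivAt (meanPow r c10 c01 c00)
      (r / 2 * ((x + c10) ^ (r - 1) * (c01 + c00) ^ r + (x + c01) ^ (r - 1) * (c10 + c00) ^ r))
      x := by
  have hpa := ((hasDerivAt_id x).add_const c10).rpow_const (p := r) (Or.inl ha1)
  have hpb := ((hasDerivAt_id x).add_const c01).rpow_const (p := r) (Or.inl hb1)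
  refine (((hpa.mul_const ((c01 + c00) ^ r)).add (hpb.mul_const ((c10 + c00) ^ r))).const_mul
    (1 / 2)).congr_deriv ?_
  simp only [id]
  ring

theorem quotient_numerator_eq (hr : r ≠ 0) {x : ℝ} (ha1 : x + c10 ≠ 0) (hb1 : x + c01 ≠ 0) :
    c00 * meanPow r c10 c01 c00 x - 1 / r * (c00 * x - c10 * c01) *
        (r / 2 * ((x + c10) ^ (r - 1) * (c01 + c00) ^ r + (x + c01) ^ (r - 1) * (c10 + c00) ^ r)) =
      ((c01 + c00) ^ r * (x + c10) ^ (r - 1) * (c01 + c00) * c10 +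
        (c10 + c00) ^ r * (x + c01) ^ (r - 1) * (c10 + c00) * c01) / 2 := by
  rw [meanPow, Real.rpow_sub_one ha1, Real.rpow_sub_one hb1]
  field_simp
  ring

theorem hasDerivAt_c11 (hr : r ≠ 0) {x : ℝ} (ha1 : 0 < x + c10) (ha0 : 0 < c01 + c00)
    (hb1 : 0 < x + c01) (hb0 : 0 < c10 + c00) :
    HasDerivAt (fun y => GM r y c10 c01 c00)
      (((c01 + c00) ^ r * (x + c10) ^ (r - 1) * (c01 + c00) * c10 +
          (c10 + c00) ^ r * (x + c01) ^ (r - 1) * (c10 + c00) * c01) /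
        (2 * (meanPow r c10 c01 c00 x * meanPow r c10 c01 c00 x ^ (1 / r)))) x := by
  have hnum : HasDerivAt (fun y => c00 * y - c10 * c01) (c00 * 1) x :=
    ((hasDerivAt_id x).const_mul c00).sub_const _
  have h := hnum.div_rpow_const (1 / r) (hasDerivAt_meanPow (r := r) ha1.ne' hb1.ne')
    (meanPow_pos ha1 ha0 hb1 hb0)
  simp only [eq_div_meanPow r c10 c01 c00]
  rwa [mul_one, quotient_numerator_eq hr ha1.ne' hb1.ne', div_div] at h

end GM

theorem gm_strictly_increasing_in_c11_general (r : ℝ) (hr : r ≠ 0)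
    (c11 c10 c01 c00 : ℝ)
    (h10 : 0 ≤ c10) (h01 : 0 ≤ c01)
    (ha1 : 0 < c11 + c10) (ha0 : 0 < c01 + c00)
    (hb1 : 0 < c11 + c01) (hb0 : 0 < c10 + c00) :
    Real.sign (deriv (fun x => GM r x c10 c01 c00) c11) =
      Real.sign ((c01 + c00) ^ r * (c11 + c10) ^ (r - 1) * (c01 + c00) * c10 +
                 (c10 + c00) ^ r * (c11 + c01) ^ (r - 1) * (c10 + c00) * c01) ∧
    0 ≤ (c01 + c00) ^ r * (c11 + c10) ^ (r - 1) * (c01 + c00) * c10 +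
        (c10 + c00) ^ r * (c11 + c01) ^ (r - 1) * (c10 + c00) * c01 ∧
    ((0 < c10 ∨ 0 < c01) → 0 < deriv (fun x => GM r x c10 c01 c00) c11) := by
  have hM := GM.meanPow_pos (r := r) ha1 ha0 hb1 hb0
  have hden : 0 < 2 * (GM.meanPow r c10 c01 c00 c11 * GM.meanPow r c10 c01 c00 c11 ^ (1 / r)) := by
    have := Real.rpow_pos_of_pos hM (1 / r)
    positivity
  rw [(GM.hasDerivAt_c11 hr ha1 ha0 hb1 hb0).deriv, Real.sign_div_of_pos hden]
  have := Real.rpow_pos_of_pos ha0 r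
  have := Real.rpow_pos_of_pos hb0 r
  have := Real.rpow_pos_of_pos ha1 (r - 1)
  have := Real.rpow_pos_of_pos hb1 (r - 1)
  refine ⟨rfl, by positivity, fun hc => div_pos ?_ hden⟩
  rcases hc with hc | hc
  · exact add_pos_of_pos_of_nonneg (by positivity) (by positivity)
  · exact add_pos_of_nonneg_of_pos (by positivity) (by positivity)

/-- GM_r is strictly increasing in c11: its partial derivative w.r.t. c11 has the
same sign as a0^r·a1^(r−1)·a0·c10 + b0^r·b1^(r−1)·b0·c01 ≥ 0, and is strictly
positive whenever c10 > 0 or c01 > 0. -/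
theorem gm_strictly_increasing_in_c11 (r : ℝ) (hr : r ≠ 0)
    (c11 c10 c01 c00 : ℝ)
    (h11 : 0 ≤ c11) (h10 : 0 ≤ c10) (h01 : 0 ≤ c01) (h00 : 0 ≤ c00)
    (ha1 : 0 < c11 + c10) (ha0 : 0 < c01 + c00)
    (hb1 : 0 < c11 + c01) (hb0 : 0 < c10 + c00) :
    Real.sign (deriv (fun x => GM r x c10 c01 c00) c11) =
      Real.sign ((c01 + c00) ^ r * (c11 + c10) ^ (r - 1) * (c01 + c00) * c10 +
                 (c10 + c00) ^ r * (c11 + c01) ^ (r - 1) * (c10 + c00) * c01) ∧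
    0 ≤ (c01 + c00) ^ r * (c11 + c10) ^ (r - 1) * (c01 + c00) * c10 +
        (c10 + c00) ^ r * (c11 + c01) ^ (r - 1) * (c10 + c00) * c01 ∧
    ((0 < c10 ∨ 0 < c01) → 0 < deriv (fun x => GM r x c10 c01 c00) c11) :=
  gm_strictly_increasing_in_c11_general r hr c11 c10 c01 c00 h10 h01 ha1 ha0 hb1 hb0
end

section
/- For a binary confusion matrix C with a0, a1, b0, b1 all positive, the Generalized Means measure with r = −1 satisfies GM_{−1}(C) = BA(C) + BA(C^T) − 1, where BA(C) = ½(c11/a1 + c00/a0) and BA(C^T) = ½(c11/b1 + c00/b0); equivalently, GM_{−1}(C) = (n·c11 − a1·b1)·½·(1/(a0·a1) + 1/(b0·b1)) = ½(c11/a1 + c00/a0) + ½(c11/b1 + c00/b0) − 1. -/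
/-- GM_{−1} = BA(C) + BA(Cᵀ) − 1, i.e. 1 + GM_{−1} = 2·SBA: with
n = c11+c10+c01+c00, a1 = c11+c10, a0 = c01+c00, b1 = c11+c01, b0 = c10+c00
all positive,
(n·c11 − a1·b1)·½·(1/(a0·a1) + 1/(b0·b1))
  = ½(c11/a1 + c00/a0) + ½(c11/b1 + c00/b0) − 1. -/
theorem gm_neg_one_eq_sba (c11 c10 c01 c00 : ℝ)
    (ha1 : 0 < c11 + c10) (ha0 : 0 < c01 + c00)
    (hb1 : 0 < c11 + c01) (hb0 : 0 < c10 + c00) :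
    ((c11 + c10 + c01 + c00) * c11 - (c11 + c10) * (c11 + c01)) *
        (1 / 2) * (1 / ((c01 + c00) * (c11 + c10)) + 1 / ((c10 + c00) * (c11 + c01)))
      = (1 / 2) * (c11 / (c11 + c10) + c00 / (c01 + c00)) +
        (1 / 2) * (c11 / (c11 + c01) + c00 / (c10 + c00)) - 1 := by
  field_simp
  ring
end

section
/- The binary Generalized Means measure GM_r satisfies maximal agreement with constant 1 and minimal agreement with constant −1: for any binary confusion matrix with a0,a1,b0,b1 > 0, we have −1 ≤ GM_r ≤ 1; GM_r = 1 if and only if c10 = c01 = 0, and GM_r = −1 if and only if c11 = c00 = 0. -/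
noncomputable def powerMean (r x y : ℝ) : ℝ :=
  ((1 / 2) * (x ^ r + y ^ r)) ^ (1 / r)

lemma powerMean_self {r x : ℝ} (hr : r ≠ 0) (hx : 0 ≤ x) : powerMean r x x = x := by
  rw [powerMean, ← two_mul, ← mul_assoc, one_div_mul_cancel two_ne_zero, one_mul, one_div,
    Real.rpow_rpow_inv hx hr]

lemma min_le_powerMean {r x y : ℝ} (hr : r ≠ 0) (hx : 0 < x) (hy : 0 < y) :
    min x y ≤ powerMean r x y := by
  have hm : 0 < min x y := lt_min hx hy
  rw [powerMean, one_div r]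
  rcases hr.lt_or_gt with hneg | hpos
  · rw [Real.le_rpow_inv_iff_of_neg hm (by positivity) hneg]
    have := Real.rpow_le_rpow_of_nonpos hm (min_le_left x y) hneg.le
    have := Real.rpow_le_rpow_of_nonpos hm (min_le_right x y) hneg.le
    linarith
  · rw [Real.le_rpow_inv_iff_of_pos hm.le (by positivity) hpos]
    have := Real.rpow_le_rpow hm.le (min_le_left x y) hpos.le
    have := Real.rpow_le_rpow hm.le (min_le_right x y) hpos.le
    linarith

lemma GM_eq_div_powerMean {r a b c d : ℝ} (hab : 0 ≤ a + b) (hcd : 0 ≤ c + d)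
    (hac : 0 ≤ a + c) (hbd : 0 ≤ b + d) :
    GM r a b c d = (a * d - b * c) / powerMean r ((a + b) * (c + d)) ((a + c) * (b + d)) := by
  rw [GM, powerMean, Real.mul_rpow hab hcd, Real.mul_rpow hac hbd]
  ring_nf

lemma GM_swap_columns (r a b c d : ℝ) : GM r b a d c = -GM r a b c d := by
  rw [GM, GM, add_comm b a, add_comm d c, add_comm ((a + b) ^ r * _), ← neg_div]
  ring_nf

lemma det_le_rowSum_mul_rowSum {a b c d : ℝ} (ha : 0 ≤ a) (hb : 0 ≤ b) (hc : 0 ≤ c)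
    (hd : 0 ≤ d) : a * d - b * c ≤ (a + b) * (c + d) := by
  nlinarith [mul_nonneg ha hc, mul_nonneg hb hc, mul_nonneg hb hd]

lemma eq_zero_of_rowSum_mul_rowSum_eq_det {a b c d : ℝ} (ha : 0 ≤ a) (hb : 0 ≤ b) (hc : 0 ≤ c)
    (hd : 0 ≤ d) (hab : 0 < a + b) (hcd : 0 < c + d)
    (h : (a + b) * (c + d) = a * d - b * c) : b = 0 ∧ c = 0 := by
  have hb' : b * (c + d) = 0 := by nlinarith [mul_nonneg ha hc, mul_nonneg hb hc, mul_nonneg hb hd]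
  have hc' : c * (a + b) = 0 := by nlinarith [mul_nonneg ha hc, mul_nonneg hb hc, mul_nonneg hb hd]
  exact ⟨(mul_eq_zero.mp hb').resolve_right hcd.ne', (mul_eq_zero.mp hc').resolve_right hab.ne'⟩

theorem GM_le_one_and_eq_one_iff {r a b c d : ℝ} (hr : r ≠ 0) (ha : 0 ≤ a) (hb : 0 ≤ b)
    (hc : 0 ≤ c) (hd : 0 ≤ d) (hab : 0 < a + b) (hcd : 0 < c + d) (hac : 0 < a + c)
    (hbd : 0 < b + d) :
    GM r a b c d ≤ 1 ∧ (GM r a b c d = 1 ↔ b = 0 ∧ c = 0) := by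
  set X := (a + b) * (c + d)
  set Y := (a + c) * (b + d)
  set M := powerMean r X Y
  have hM : min X Y ≤ M := min_le_powerMean hr (mul_pos hab hcd) (mul_pos hac hbd)
  have hN : a * d - b * c ≤ min X Y :=
    le_min (det_le_rowSum_mul_rowSum ha hb hc hd) (by linarith [det_le_rowSum_mul_rowSum ha hc hb hd])
  have hMpos : 0 < M := (lt_min (mul_pos hab hcd) (mul_pos hac hbd)).trans_le hM
  rw [GM_eq_div_powerMean hab.le hcd.le hac.le hbd.le, div_le_one hMpos, div_eq_one_iff_eq hMpos.ne']
  refine ⟨hN.trans hM, fun hNM => ?_, fun ⟨hb0, hc0⟩ => ?_⟩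
  · rcases min_choice X Y with hX | hY
    · exact eq_zero_of_rowSum_mul_rowSum_eq_det ha hb hc hd hab hcd (by linarith)
    · exact (eq_zero_of_rowSum_mul_rowSum_eq_det ha hc hb hd hac hbd (by linarith)).symm
  · subst hb0 hc0
    simp only [M, X, Y, add_zero, zero_add, mul_zero, sub_zero]
    exact (powerMean_self hr (mul_nonneg ha hd)).symm

/-- GM_r satisfies maximal agreement with constant 1 and minimal agreement with
constant −1: for any binary confusion matrix of nonnegative integers with
a1, a0, b1, b0 > 0, we have −1 ≤ GM_r ≤ 1, GM_r = 1 iff c10 = c01 = 0, and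
GM_r = −1 iff c11 = c00 = 0. -/
theorem gm_max_min_agreement (r : ℝ) (hr : r ≠ 0) (c11 c10 c01 c00 : ℕ)
    (ha1 : 0 < c11 + c10) (ha0 : 0 < c01 + c00)
    (hb1 : 0 < c11 + c01) (hb0 : 0 < c10 + c00) :
    -1 ≤ GM r c11 c10 c01 c00 ∧
    GM r c11 c10 c01 c00 ≤ 1 ∧
    (GM r c11 c10 c01 c00 = 1 ↔ c10 = 0 ∧ c01 = 0) ∧
    (GM r c11 c10 c01 c00 = -1 ↔ c11 = 0 ∧ c00 = 0) := by
  have ha1' : (0 : ℝ) < c11 + c10 := by exact_mod_cast ha1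
  have ha0' : (0 : ℝ) < c01 + c00 := by exact_mod_cast ha0
  have hb1' : (0 : ℝ) < c11 + c01 := by exact_mod_cast hb1
  have hb0' : (0 : ℝ) < c10 + c00 := by exact_mod_cast hb0
  obtain ⟨hle, heq⟩ := GM_le_one_and_eq_one_iff hr (Nat.cast_nonneg c11) (Nat.cast_nonneg c10)
    (Nat.cast_nonneg c01) (Nat.cast_nonneg c00) ha1' ha0' hb1' hb0'
  obtain ⟨hle', heq'⟩ := GM_le_one_and_eq_one_iff hr (Nat.cast_nonneg c10) (Nat.cast_nonneg c11)
    (Nat.cast_nonneg c00) (Nat.cast_nonneg c01) (by linarith) (by linarith) hb0' hb1'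
  rw [GM_swap_columns] at hle' heq'
  refine ⟨by linarith, hle, by simpa using heq, ?_⟩
  simpa [neg_eq_iff_eq_neg] using heq'
end

section
/- The Correlation Distance CD(A,B) = (1/π)·arccos(CC(A,B)) is a metric on the set of labelings of n elements into m classes (for any m ≥ 2), where CC is the multiclass Matthews Correlation Coefficient, restricted to labelings A for which Σ_j a_j² < n² (i.e., A is not constant). In particular, for any three non-constant labelings A, B, C: CD(A,C) ≤ CD(A,B) + CD(B,C). The proof identifies CC(A,B) as the cosine of the angle between the centered one-hot-encoding matrices: with Ā = (a_{ij} − a_j/n) where a_{ij} = 1{A(i)=j}, one has ⟨Ā,B̄⟩ = Σ_j (c_jj − a_j·b_j/n), ‖Ā‖² = n − Σ_j a_j²/n, and CC(A,B) = ⟨Ā,B̄⟩/(‖Ā‖·‖B̄‖). -/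
/-!
Encode a labeling `A` by its centered one-hot matrix `Ā = (1{A i = j} - a_j / n)`. Column by
column one computes `n ⟪Ā, B̄⟫ = n Σ_j c_jj - Σ_j a_j b_j` and `n ‖Ā‖² = n² - Σ_j a_j²`, so
`CC(A, B)` is the cosine of the angle between `Ā` and `B̄`, `CD` is that angle divided by `π`,
and the triangle inequality for angles between vectors gives the claim.
-/

open Finset

/-- Class size: number of elements with label j. -/
def csize {n m : ℕ} (A : Fin n → Fin m) (j : Fin m) : ℕ :=
  (univ.filter fun x => A x = j).card

/-- The multiclass Matthews Correlation Coefficient of two labelings. -/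
noncomputable def mcc {n m : ℕ} (A B : Fin n → Fin m) : ℝ :=
  ((n : ℝ) * ∑ i, ((univ.filter fun x => A x = i ∧ B x = i).card : ℝ) -
      ∑ i, (csize A i : ℝ) * (csize B i : ℝ)) /
    Real.sqrt (((n : ℝ) ^ 2 - ∑ i, (csize A i : ℝ) ^ 2) *
               ((n : ℝ) ^ 2 - ∑ i, (csize B i : ℝ) ^ 2))

/-- The Correlation Distance CD = (1/π)·arccos(CC). -/
noncomputable def corrDist {n m : ℕ} (A B : Fin n → Fin m) : ℝ :=
  (1 / Real.pi) * Real.arccos (mcc A B)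

open InnerProductGeometry

theorem card_mul_sum_centered_indicator_mul {ι : Type*} [Fintype ι] (hι : Fintype.card ι ≠ 0)
    (p q : ι → Prop) [DecidablePred p] [DecidablePred q] :
    (Fintype.card ι : ℝ) * ∑ i, ((if p i then 1 else 0) - (#{i | p i} : ℝ) / Fintype.card ι) *
      ((if q i then 1 else 0) - (#{i | q i} : ℝ) / Fintype.card ι) =
      Fintype.card ι * #{i | p i ∧ q i} - #{i | p i} * #{i | q i} := by
  have hι' : (Fintype.card ι : ℝ) ≠ 0 := Nat.cast_ne_zero.mpr hι
  simp only [sub_mul, mul_sub, sum_sub_distrib, ← sum_mul, ← mul_sum, ite_zero_mul_ite_zero,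
    one_mul, sum_boole, sum_const, card_univ, nsmul_eq_mul]
  field_simp
  ring

section Labeling

variable {n m : ℕ}

noncomputable def centeredOneHot (A : Fin n → Fin m) : EuclideanSpace ℝ (Fin n × Fin m) :=
  WithLp.toLp 2 fun p => (if A p.1 = p.2 then 1 else 0) - (csize A p.2 : ℝ) / n

theorem sum_csize (A : Fin n → Fin m) : ∑ j, csize A j = n := by
  simpa [csize] using (card_eq_sum_card_fiberwise (s := univ) fun x _ => mem_univ (A x)).symm

theorem card_mul_inner_centeredOneHot (hn : n ≠ 0) (A B : Fin n → Fin m) :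
    n * inner ℝ (centeredOneHot A) (centeredOneHot B) =
      n * ∑ j, (#{x | A x = j ∧ B x = j} : ℝ) -
        ∑ j, (csize A j : ℝ) * csize B j := by
  rw [real_inner_comm]
  simp only [PiLp.inner_apply, Fintype.sum_prod_type]
  rw [sum_comm, mul_sum, mul_sum, ← sum_sub_distrib]
  refine sum_congr rfl fun j _ => ?_
  simpa [centeredOneHot, csize] using
    card_mul_sum_centered_indicator_mul (by simpa using hn) (A · = j) (B · = j)

theorem card_mul_norm_centeredOneHot_sq (hn : n ≠ 0) (A : Fin n → Fin m) :
    n * ‖centeredOneHot A‖ ^ 2 = (n : ℝ) ^ 2 - ∑ j, (csize A j : ℝ) ^ 2 := by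
  have h := card_mul_inner_centeredOneHot hn A A
  simp only [and_self, real_inner_self_eq_norm_sq] at h
  rw [h]
  have hsum : ∑ j, (#{x | A x = j} : ℝ) = n := by
    exact_mod_cast sum_csize A
  rw [hsum]
  simp only [sq]

/-- For a constant labeling `Ā = 0`, and both sides are `0` by division by zero. -/
theorem mcc_eq_inner_div_norm_mul_norm (A B : Fin n → Fin m) :
    mcc A B = inner ℝ (centeredOneHot A) (centeredOneHot B) /
      (‖centeredOneHot A‖ * ‖centeredOneHot B‖) := by
  rcases eq_or_ne n 0 with rfl | hn
  · simp [mcc, csize, Subsingleton.elim (centeredOneHot A) 0]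
  have hn' : (n : ℝ) ≠ 0 := Nat.cast_ne_zero.mpr hn
  rw [mcc, ← card_mul_inner_centeredOneHot hn, ← card_mul_norm_centeredOneHot_sq hn,
    ← card_mul_norm_centeredOneHot_sq hn,
    show ∀ a b c : ℝ, a * b ^ 2 * (a * c ^ 2) = (a * (b * c)) ^ 2 by intros; ring,
    Real.sqrt_sq (by positivity), mul_div_mul_left _ _ hn']

theorem corrDist_eq_angle (A B : Fin n → Fin m) :
    corrDist A B = angle (centeredOneHot A) (centeredOneHot B) / Real.pi := by
  rw [corrDist, angle, mcc_eq_inner_div_norm_mul_norm, one_div_mul_eq_div]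

end Labeling

theorem corrDist_triangle_general {n m : ℕ} (A B C : Fin n → Fin m) :
    corrDist A C ≤ corrDist A B + corrDist B C := by
  simp only [corrDist_eq_angle, ← add_div]
  gcongr
  exact angle_le_angle_add_angle _ _ _

/-- The Correlation Distance satisfies the triangle inequality on non-constant
labelings of n elements into m ≥ 2 classes (A non-constant: Σ_j a_j² < n²). -/
theorem corrDist_triangle {n m : ℕ} (hm : 2 ≤ m) (A B C : Fin n → Fin m)
    (hA : ∑ j, (csize A j) ^ 2 < n ^ 2)
    (hB : ∑ j, (csize B j) ^ 2 < n ^ 2)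
    (hC : ∑ j, (csize C j) ^ 2 < n ^ 2) :
    corrDist A C ≤ corrDist A B + corrDist B C :=
  corrDist_triangle_general A B C
end

section
/- Cohen's Kappa attains its minimum value −(Σ_i a_i·b_i)/(n² − Σ_i a_i·b_i) exactly on zero-diagonal confusion matrices, and this minimum is not a constant (it depends on the class sizes). Consequently, Cohen's Kappa does not satisfy the minimal agreement property: there exist two zero-diagonal binary confusion matrices with the same n on which κ takes different values. For example, for n=4, the matrix (c11,c10,c01,c00)=(0,1,3,0) has a1=1, a0=3, b1=3, b0=1, Σa_ib_i=6 and κ=−6/10=−3/5, while (0,2,2,0) has a1=a0=b1=b0=2, Σa_ib_i=8 and κ=−8/8=−1; since −3/5 ≠ −1, minimal agreement fails. -/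
/-- Cohen's Kappa of a (real-cast) binary confusion matrix:
κ = (n(c11+c00) − (a1·b1 + a0·b0)) / (n² − (a1·b1 + a0·b0)). -/
noncomputable def kappa (c11 c10 c01 c00 : ℝ) : ℝ :=
  ((c11 + c10 + c01 + c00) * (c11 + c00) -
      ((c11 + c10) * (c11 + c01) + (c01 + c00) * (c10 + c00))) /
    ((c11 + c10 + c01 + c00) ^ 2 -
      ((c11 + c10) * (c11 + c01) + (c01 + c00) * (c10 + c00)))

/-- Cohen's Kappa attains its minimum −(Σ a_i b_i)/(n² − Σ a_i b_i) exactly on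
zero-diagonal confusion matrices, and this minimum is not constant: for n = 4,
κ(0,1,3,0) = −3/5 while κ(0,2,2,0) = −1, so minimal agreement fails. -/
theorem kappa_no_minimal_agreement :
    (∀ c11 c10 c01 c00 : ℕ, 0 < c11 + c10 + c01 + c00 →
      ((c11 + c10) * (c11 + c01) + (c01 + c00) * (c10 + c00) : ℝ) <
        ((c11 + c10 + c01 + c00 : ℕ) : ℝ) ^ 2 →
      (-((((c11 + c10) * (c11 + c01) + (c01 + c00) * (c10 + c00) : ℕ) : ℝ) /
          (((c11 + c10 + c01 + c00 : ℕ) : ℝ) ^ 2 -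
            (((c11 + c10) * (c11 + c01) + (c01 + c00) * (c10 + c00) : ℕ) : ℝ)))
        ≤ kappa c11 c10 c01 c00 ∧
       (kappa c11 c10 c01 c00 =
          -((((c11 + c10) * (c11 + c01) + (c01 + c00) * (c10 + c00) : ℕ) : ℝ) /
            (((c11 + c10 + c01 + c00 : ℕ) : ℝ) ^ 2 -
              (((c11 + c10) * (c11 + c01) + (c01 + c00) * (c10 + c00) : ℕ) : ℝ)))
          ↔ c11 = 0 ∧ c00 = 0))) ∧
    kappa 0 1 3 0 = -(3 / 5) ∧
    kappa 0 2 2 0 = -1 ∧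
    kappa 0 1 3 0 ≠ kappa 0 2 2 0 := by
  refine ⟨?_, ?_, ?_, ?_⟩
  · intro c11 c10 c01 c00 hn hS
    set x : ℝ := (c11 : ℝ)
    set y : ℝ := (c10 : ℝ)
    set z : ℝ := (c01 : ℝ)
    set w : ℝ := (c00 : ℝ)
    have hx : 0 ≤ x := Nat.cast_nonneg _
    have hy : 0 ≤ y := Nat.cast_nonneg _
    have hz : 0 ≤ z := Nat.cast_nonneg _
    have hw : 0 ≤ w := Nat.cast_nonneg _
    have hcast : (((c11 + c10) * (c11 + c01) + (c01 + c00) * (c10 + c00) : ℕ) : ℝ)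
        = (x + y) * (x + z) + (z + w) * (y + w) := by push_cast; ring
    have hncast : (((c11 + c10 + c01 + c00 : ℕ)) : ℝ) = x + y + z + w := by push_cast; ring
    simp only [hcast, hncast] at hS ⊢
    set S : ℝ := (x + y) * (x + z) + (z + w) * (y + w) with hSdef
    set N : ℝ := x + y + z + w with hNdef
    have hD : 0 < N ^ 2 - S := sub_pos.mpr hS
    have hNpos : (0 : ℝ) < N := by
      have : (0 : ℕ) < c11 + c10 + c01 + c00 := hn
      have := Nat.cast_pos (α := ℝ) |>.mpr this
      rw [hncast] at this; exact this
    have hk : kappa x y z w = (N * (x + w) - S) / (N ^ 2 - S) := by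
      unfold kappa; rw [← hSdef, ← hNdef]
    have hmin : -(S / (N ^ 2 - S)) = (0 - S) / (N ^ 2 - S) := by
      rw [zero_sub, neg_div]
    constructor
    · rw [hk, hmin]
      apply div_le_div_of_nonneg_right ?_ hD.le |>.trans_eq rfl
      nlinarith [mul_nonneg (le_of_lt hNpos) (add_nonneg hx hw)]
    · rw [hk, hmin]
      rw [div_eq_div_iff (ne_of_gt hD) (ne_of_gt hD)]
      constructor
      · intro h
        have h2 : N * (x + w) = 0 := by nlinarith
        have h3 : x + w = 0 := by
          rcases mul_eq_zero.mp h2 with h | h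
          · exact absurd h (ne_of_gt hNpos)
          · exact h
        have hx0 : x = 0 := le_antisymm (by linarith) hx
        have hw0 : w = 0 := le_antisymm (by linarith) hw
        have hx0' : (c11:ℝ) = 0 := hx0
        have hw0' : (c00:ℝ) = 0 := hw0
        exact ⟨by exact_mod_cast hx0', by exact_mod_cast hw0'⟩
      · rintro ⟨h1, h2⟩
        have hx0 : x = 0 := by simp [x, h1]
        have hw0 : w = 0 := by simp [w, h2]
        rw [hx0, hw0]; ring
  · unfold kappa; norm_num
  · unfold kappa; norm_num
  · unfold kappa; norm_num
end

section
/- Cohen's Kappa is not strongly monotone: for binary confusion matrices C1 = (c11,c10,c01,c00) = (1,2,1,0) and C2 = (1,3,1,0), where C2 is obtained from C1 by incrementing the off-diagonal entry c10 (which should strictly decrease a strongly monotone measure), we have κ(C1) < κ(C2). -/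
/-- Cohen's Kappa is not strongly monotone: incrementing the off-diagonal entry c10
of C1 = (1,2,1,0) to obtain C2 = (1,3,1,0) increases κ: κ(C1) = −1/2 < −3/7 = κ(C2). -/
theorem kappa_not_strongly_monotone :
    kappa 1 2 1 0 = -(1 / 2) ∧
    kappa 1 3 1 0 = -(3 / 7) ∧
    kappa 1 2 1 0 < kappa 1 3 1 0 := by
  have h1 : kappa 1 2 1 0 = -(1 / 2) := by unfold kappa; norm_num
  have h2 : kappa 1 3 1 0 = -(3 / 7) := by unfold kappa; norm_num
  refine ⟨h1, h2, ?_⟩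
  rw [h1, h2]; norm_num
end

section
/- The multiclass Matthews Correlation Coefficient is not monotone for m = 3 classes: for the confusion matrices C1 = ((1,0,0),(6,1,0),(0,0,1)) and C2 = ((1,0,0),(7,0,0),(0,0,1)), where C1 is obtained from C2 by moving one element from the off-diagonal entry c21 to the diagonal entry c22 (which should strictly increase a monotone measure), we nevertheless have CC(C2) > CC(C1). -/
/-- Multiclass Matthews Correlation Coefficient of an m×m confusion matrix:
CC = (n·Σ_i c_ii − Σ_i a_i b_i)/√((n² − Σ_i b_i²)(n² − Σ_i a_i²)). -/
noncomputable def mccMat {m : ℕ} (C : Matrix (Fin m) (Fin m) ℝ) : ℝ :=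
  ((∑ i, ∑ j, C i j) * (∑ i, C i i) -
      ∑ i, (∑ j, C i j) * (∑ j, C j i)) /
    Real.sqrt (((∑ i, ∑ j, C i j) ^ 2 - ∑ i, (∑ j, C j i) ^ 2) *
               ((∑ i, ∑ j, C i j) ^ 2 - ∑ i, (∑ j, C i j) ^ 2))

/-! Both matrices have `n = 9` and row sums `(1, 7, 1)`. Moving the element to the diagonal
raises the trace from 2 to 3, but it also flattens the column sums from `(8, 0, 1)` to
`(7, 1, 1)`, which raises `Σ aᵢbᵢ` from 9 to 15 and enlarges the first factor under the root
from 16 to 30. Hence `CC(C₁) = 12/30 = 2/5` while `CC(C₂) = 9/√480 ≈ 0.41`. -/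

lemma mccMat_after_move : mccMat !![(1:ℝ), 0, 0; 6, 1, 0; 0, 0, 1] = 2 / 5 := by
  have hroot : Real.sqrt ((81 - 51) * (81 - 51)) = 30 := by
    rw [Real.sqrt_eq_iff_mul_self_eq_of_pos] <;> norm_num
  simp only [mccMat, Fin.sum_univ_three, Matrix.of_apply, Matrix.cons_val', Matrix.cons_val_zero,
    Matrix.cons_val_one, Matrix.cons_val_two, Matrix.empty_val', Matrix.cons_val_fin_one]
  norm_num [hroot]

lemma mccMat_before_move : mccMat !![(1:ℝ), 0, 0; 7, 0, 0; 0, 0, 1] = 9 / Real.sqrt 480 := by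
  simp only [mccMat, Fin.sum_univ_three, Matrix.of_apply, Matrix.cons_val', Matrix.cons_val_zero,
    Matrix.cons_val_one, Matrix.cons_val_two, Matrix.empty_val', Matrix.cons_val_fin_one]
  norm_num

lemma two_fifths_lt_nine_div_sqrt_480 : (2 / 5 : ℝ) < 9 / Real.sqrt 480 := by
  have hpos : 0 < Real.sqrt 480 := Real.sqrt_pos.mpr (by norm_num)
  have hlt : Real.sqrt 480 < 45 / 2 := (Real.sqrt_lt' (by norm_num)).mpr (by norm_num)
  rw [lt_div_iff₀ hpos]
  linarith

/-- The multiclass CC is not monotone for m = 3: moving one element from the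
off-diagonal entry c21 of C2 = ((1,0,0),(7,0,0),(0,0,1)) to the diagonal entry c22
gives C1 = ((1,0,0),(6,1,0),(0,0,1)), yet CC(C2) > CC(C1). -/
theorem mcc_not_monotone :
    mccMat !![(1:ℝ), 0, 0; 6, 1, 0; 0, 0, 1] <
      mccMat !![(1:ℝ), 0, 0; 7, 0, 0; 0, 0, 1] := by
  rw [mccMat_after_move, mccMat_before_move]
  exact two_fifths_lt_nine_div_sqrt_480
end

section
/- The multiclass Matthews Correlation Coefficient does not satisfy minimal agreement for m = 3: the zero-diagonal confusion matrices C1 = ((0,1,0),(0,0,1),(2,0,0)) and C2 = ((0,1,0),(1,0,1),(0,1,0)) satisfy CC(C1) = −1/2 and CC(C2) = −3/5, so CC is not constant on zero-diagonal matrices. -/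
/-- The multiclass CC does not satisfy minimal agreement for m = 3: the
zero-diagonal matrices C1 = ((0,1,0),(0,0,1),(2,0,0)) and
C2 = ((0,1,0),(1,0,1),(0,1,0)) have CC(C1) = −1/2 ≠ −3/5 = CC(C2). -/
theorem mcc_no_minimal_agreement :
    mccMat !![(0:ℝ), 1, 0; 0, 0, 1; 2, 0, 0] = -(1 / 2) ∧
    mccMat !![(0:ℝ), 1, 0; 1, 0, 1; 0, 1, 0] = -(3 / 5) := by
  have h : Real.sqrt 100 = 10 := by
    rw [show (100:ℝ) = 10^2 by norm_num, Real.sqrt_sq (by norm_num)]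
  constructor <;>
  · simp only [mccMat, Fin.sum_univ_three, Matrix.cons_val', Matrix.cons_val_zero,
      Matrix.cons_val_one, Matrix.head_cons, Matrix.empty_val', Matrix.cons_val_fin_one,
      Matrix.head_fin_const, Matrix.cons_val_two, Matrix.tail_cons, Matrix.of_apply]
    norm_num [h]
end

section
/- Every smooth binary classification measure M(p_AB, p_A, p_B) satisfying ∞-th order constant baseline with constant 0 must be of the form M(p_AB,p_A,p_B) = s(p_A,p_B)·(p_AB − p_A·p_B) for some function s; if in addition M is symmetric (M(p_AB,p_B,p_A) = M(p_AB,p_A,p_B)), class-symmetric (M(p_AB,p_A,p_B) = M(1−p_A−p_B+p_AB, 1−p_A, 1−p_B)), has maximal agreement with constant 1 and minimal agreement with constant −1, then s must satisfy: s(p_B,p_A) = s(p_A,p_B) = s(1−p_A,1−p_B); s(p,p) = s(p,1−p) = 1/(p(1−p)); and for p_B ≠ 1−p_A, s(p_A,p_B) < max{1/(p_A p_B), 1/((1−p_A)(1−p_B))}, while for p_B ≠ p_A, s(p_A,p_B) < max{1/(p_A(1−p_B)), 1/((1−p_A)p_B)}. -/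
/-- Admissible domain for the class-size fractions: p_A, p_B ∈ (0,1). -/
def inDom (pA pB : ℝ) : Prop := 0 < pA ∧ pA < 1 ∧ 0 < pB ∧ pB < 1

/-- Admissible fraction of agreeing positives:
p_AB ∈ [max(0, p_A+p_B−1), min(p_A,p_B)]. -/
def adm (pAB pA pB : ℝ) : Prop := max 0 (pA + pB - 1) ≤ pAB ∧ pAB ≤ min pA pB

/-- Characterization of smooth binary measures satisfying ∞-th order constant
baseline (with constant 0), symmetry, class-symmetry, maximal agreement (constant 1)
and minimal agreement (constant −1): they are of the form
M(p_AB,p_A,p_B) = s(p_A,p_B)·(p_AB − p_A p_B), where s is symmetric,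
class-symmetric, equals 1/(p(1−p)) on the diagonal and anti-diagonal, and satisfies
the two strict upper bounds. -/
theorem constant_baseline_measure_form (M : ℝ → ℝ → ℝ → ℝ)
    -- smoothness: the Taylor series of p_AB ↦ M(p_AB,p_A,p_B) around p_A·p_B
    -- converges absolutely on the admissible interval, with sum M(p_AB,p_A,p_B)
    (hsmooth : ∀ pA pB, inDom pA pB → ∀ pAB, adm pAB pA pB →
      Summable (fun k : ℕ =>
        |(pAB - pA * pB) ^ k / (k.factorial : ℝ) *
          iteratedDeriv k (fun x => M x pA pB) (pA * pB)|) ∧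
      HasSum (fun k : ℕ =>
        (pAB - pA * pB) ^ k / (k.factorial : ℝ) *
          iteratedDeriv k (fun x => M x pA pB) (pA * pB)) (M pAB pA pB))
    -- ∞-th order constant baseline with constant 0
    (hbase0 : ∀ pA pB, inDom pA pB → M (pA * pB) pA pB = 0)
    (hbaseH : ∀ pA pB, inDom pA pB → ∀ l : ℕ, 2 ≤ l →
      iteratedDeriv l (fun x => M x pA pB) (pA * pB) = 0)
    -- symmetry
    (hsym : ∀ pA pB, inDom pA pB → ∀ pAB, adm pAB pA pB →
      M pAB pB pA = M pAB pA pB)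
    -- class-symmetry
    (hclass : ∀ pA pB, inDom pA pB → ∀ pAB, adm pAB pA pB →
      M pAB pA pB = M (1 - pA - pB + pAB) (1 - pA) (1 - pB))
    -- maximal agreement with constant 1
    (hmax : ∀ pA pB, inDom pA pB → ∀ pAB, adm pAB pA pB →
      M pAB pA pB ≤ 1 ∧ (M pAB pA pB = 1 ↔ pAB = pA ∧ pA = pB))
    -- minimal agreement with constant −1
    (hmin : ∀ pA pB, inDom pA pB → ∀ pAB, adm pAB pA pB →
      -1 ≤ M pAB pA pB ∧ (M pAB pA pB = -1 ↔ pAB = 0 ∧ pB = 1 - pA)) :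
    ∃ s : ℝ → ℝ → ℝ,
      (∀ pA pB, inDom pA pB → ∀ pAB, adm pAB pA pB →
        M pAB pA pB = s pA pB * (pAB - pA * pB)) ∧
      (∀ pA pB, inDom pA pB →
        s pB pA = s pA pB ∧ s pA pB = s (1 - pA) (1 - pB)) ∧
      (∀ p : ℝ, 0 < p → p < 1 →
        s p p = 1 / (p * (1 - p)) ∧ s p (1 - p) = 1 / (p * (1 - p))) ∧
      (∀ pA pB, inDom pA pB → pB ≠ 1 - pA →
        s pA pB < max (1 / (pA * pB)) (1 / ((1 - pA) * (1 - pB)))) ∧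
      (∀ pA pB, inDom pA pB → pB ≠ pA →
        s pA pB < max (1 / (pA * (1 - pB))) (1 / ((1 - pA) * pB))) := by
  classical
  set s : ℝ → ℝ → ℝ := fun pA pB => iteratedDeriv 1 (fun x => M x pA pB) (pA * pB) with hs_def
  -- the linear form
  have hform : ∀ pA pB, inDom pA pB → ∀ pAB, adm pAB pA pB →
      M pAB pA pB = s pA pB * (pAB - pA * pB) := by
    intro pA pB hD pAB hadm
    obtain ⟨-, hsum⟩ := hsmooth pA pB hD pAB hadm
    have h1 : HasSum (fun k : ℕ =>
        (pAB - pA * pB) ^ k / (k.factorial : ℝ) *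
          iteratedDeriv k (fun x => M x pA pB) (pA * pB))
        ((pAB - pA * pB) ^ 1 / ((Nat.factorial 1 : ℕ) : ℝ) *
          iteratedDeriv 1 (fun x => M x pA pB) (pA * pB)) := by
      apply hasSum_single 1
      intro k hk
      match k, hk with
      | 0, _ => simp [iteratedDeriv_zero, hbase0 pA pB hD]
      | (n+2), _ => rw [hbaseH pA pB hD (n+2) (by omega)]; ring
    have := hsum.unique h1
    rw [this]
    simp [hs_def]
    ring
  -- basic domain facts
  have hdomsymm : ∀ pA pB, inDom pA pB → inDom pB pA := by
    rintro pA pB ⟨a, b, c, d⟩; exact ⟨c, d, a, b⟩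
  have hdomcompl : ∀ pA pB, inDom pA pB → inDom (1 - pA) (1 - pB) := by
    rintro pA pB ⟨a, b, c, d⟩
    exact ⟨by linarith, by linarith, by linarith, by linarith⟩
  have hadm_min : ∀ pA pB, inDom pA pB → adm (min pA pB) pA pB := by
    rintro pA pB ⟨a, b, c, d⟩
    refine ⟨max_le (le_min a.le c.le) (le_min (by linarith) (by linarith)), le_refl _⟩
  have hadm_symm : ∀ pA pB pAB, adm pAB pA pB → adm pAB pB pA := by
    rintro pA pB pAB ⟨h1, h2⟩
    constructor
    · rwa [show pB + pA - 1 = pA + pB - 1 by ring]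
    · rwa [min_comm]
  have hadm_compl : ∀ pA pB pAB, adm pAB pA pB →
      adm (1 - pA - pB + pAB) (1 - pA) (1 - pB) := by
    rintro pA pB pAB ⟨h1, h2⟩
    have h10 : (0:ℝ) ≤ pAB := le_trans (le_max_left _ _) h1
    have h11 : pA + pB - 1 ≤ pAB := le_trans (le_max_right _ _) h1
    have h2a : pAB ≤ pA := le_trans h2 (min_le_left _ _)
    have h2b : pAB ≤ pB := le_trans h2 (min_le_right _ _)
    exact ⟨max_le (by linarith) (by linarith), le_min (by linarith) (by linarith)⟩
  have hmin_gt : ∀ pA pB, inDom pA pB → pA * pB < min pA pB := by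
    rintro pA pB ⟨a, b, c, d⟩
    rcases le_total pA pB with h | h
    · rw [min_eq_left h]; nlinarith
    · rw [min_eq_right h]; nlinarith
  refine ⟨s, hform, ?_, ?_, ?_, ?_⟩
  · -- symmetry and class-symmetry of s
    intro pA pB hD
    have hD' := hdomsymm pA pB hD
    have hDc := hdomcompl pA pB hD
    have hadm := hadm_min pA pB hD
    have hne : min pA pB - pA * pB ≠ 0 := by
      have := hmin_gt pA pB hD; linarith
    constructor
    · have e1 := hform pB pA hD' (min pA pB) (hadm_symm pA pB _ hadm)
      have e2 := hform pA pB hD (min pA pB) hadm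
      have e3 := hsym pA pB hD (min pA pB) hadm
      rw [e1, e2] at e3
      have : s pB pA * (min pA pB - pA * pB) = s pA pB * (min pA pB - pA * pB) := by
        rw [← e3]; ring_nf
      exact mul_right_cancel₀ hne this
    · have e1 := hform pA pB hD (min pA pB) hadm
      have e2 := hform (1 - pA) (1 - pB) hDc _ (hadm_compl pA pB _ hadm)
      have e3 := hclass pA pB hD (min pA pB) hadm
      rw [e1, e2] at e3
      have : s pA pB * (min pA pB - pA * pB) =
          s (1 - pA) (1 - pB) * (min pA pB - pA * pB) := by
        rw [e3]; ring_nf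
      exact mul_right_cancel₀ hne this
  · -- diagonal and antidiagonal
    intro p hp0 hp1
    have hD : inDom p p := ⟨hp0, hp1, hp0, hp1⟩
    have hD' : inDom p (1 - p) := ⟨hp0, hp1, by linarith, by linarith⟩
    have hq : (0:ℝ) < p * (1 - p) := by nlinarith
    constructor
    · have hadm : adm p p p := by
        refine ⟨max_le hp0.le (by linarith), by simp⟩
      have h1 : M p p p = 1 := (hmax p p hD p hadm).2.mpr ⟨rfl, rfl⟩
      have h2 := hform p p hD p hadm
      rw [h1] at h2
      rw [eq_div_iff (ne_of_gt hq)]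
      nlinarith [h2]
    · have hadm : adm 0 p (1 - p) := by
        refine ⟨max_le (le_refl 0) (by linarith), le_min hp0.le (by linarith)⟩
      have h1 : M 0 p (1 - p) = -1 := (hmin p (1 - p) hD' 0 hadm).2.mpr ⟨rfl, rfl⟩
      have h2 := hform p (1 - p) hD' 0 hadm
      rw [h1] at h2
      rw [eq_div_iff (ne_of_gt hq)]
      nlinarith [h2]
  · -- first strict bound
    rintro pA pB hD hne
    obtain ⟨a, b, c, d⟩ := hD
    set pAB := max 0 (pA + pB - 1) with hpAB
    have hadm : adm pAB pA pB :=
      ⟨le_refl _, max_le (le_min a.le c.le) (le_min (by linarith) (by linarith))⟩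
    have hM := (hmin pA pB ⟨a, b, c, d⟩ pAB hadm)
    have hMne : M pAB pA pB ≠ -1 := by
      intro h
      obtain ⟨h1, h2⟩ := hM.2.mp h
      exact hne h2
    have hMgt : -1 < M pAB pA pB := lt_of_le_of_ne hM.1 (Ne.symm hMne)
    have hf := hform pA pB ⟨a, b, c, d⟩ pAB hadm
    rw [hf] at hMgt
    rcases le_total (pA + pB - 1) 0 with h | h
    · have hp0 : pAB = 0 := max_eq_left h
      rw [hp0] at hMgt
      have hq : (0:ℝ) < pA * pB := by positivity
      have : s pA pB < 1 / (pA * pB) := by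
        rw [lt_div_iff₀ hq]; nlinarith
      exact lt_max_of_lt_left this
    · have hp0 : pAB = pA + pB - 1 := max_eq_right h
      rw [hp0] at hMgt
      have hq : (0:ℝ) < (1 - pA) * (1 - pB) := by nlinarith
      have : s pA pB < 1 / ((1 - pA) * (1 - pB)) := by
        rw [lt_div_iff₀ hq]; nlinarith
      exact lt_max_of_lt_right this
  · -- second strict bound
    rintro pA pB hD hne
    obtain ⟨a, b, c, d⟩ := hD
    have hadm := hadm_min pA pB ⟨a, b, c, d⟩
    have hM := hmax pA pB ⟨a, b, c, d⟩ (min pA pB) hadm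
    have hMne : M (min pA pB) pA pB ≠ 1 := by
      intro h
      obtain ⟨h1, h2⟩ := hM.2.mp h
      exact hne h2.symm
    have hMlt : M (min pA pB) pA pB < 1 := lt_of_le_of_ne hM.1 hMne
    have hf := hform pA pB ⟨a, b, c, d⟩ (min pA pB) hadm
    rw [hf] at hMlt
    rcases le_total pA pB with h | h
    · rw [min_eq_left h] at hMlt
      have hq : (0:ℝ) < pA * (1 - pB) := by nlinarith
      have : s pA pB < 1 / (pA * (1 - pB)) := by
        rw [lt_div_iff₀ hq]; nlinarith
      exact lt_max_of_lt_left this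
    · rw [min_eq_right h] at hMlt
      have hq : (0:ℝ) < (1 - pA) * pB := by nlinarith
      have : s pA pB < 1 / ((1 - pA) * pB) := by
        rw [lt_div_iff₀ hq]; nlinarith
      exact lt_max_of_lt_right this
end
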